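/- arXiv:1402.1197 — 4 statements merged into one kernel-verified Lean document; each statement's English description precedes it below -/
import Mathlib

section
/- Getzler identity: for all multilinear maps h ∈ C^m, f ∈ C^n, g ∈ C^p, the associator of the total composition satisfies (h ∘ f) ∘ g − h ∘ (f ∘ g) = ⟨h|fg⟩ + (−1)^{(n−1)(p−1)} ⟨h|gf⟩. -/
/-!
Both sides expand into sums of iterated partial compositions `(h ∘ᵢ f) ∘ₐ g`. By multilinearity
of `h` in its `i`-th slot, `h ∘ᵢ (f ∘ g)` is the sum of the terms `h ∘ᵢ (f ∘ⱼ g) = (h ∘ᵢ f) ∘ᵢ₊ⱼ g`,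
i.e. exactly the terms of `(h ∘ f) ∘ g` in which `g` lands inside `f`. Of the remaining terms, those
with `a ≥ i + n` form `⟨h|fg⟩`; those with `a < i` insert `f` and `g` into disjoint slots of `h`,
so they can be swapped at the Koszul sign `(-1)^{(n-1)(p-1)}` and form `⟨h|gf⟩`.
-/

open Finset

section OperadPrelude

variable {K : Type*} [CommRing K] {L : Type*} [AddCommGroup L] [Module K L]

/-- `C K L n`: the `K`-module of `n`-multilinear maps `L^n → L`
(the degree-`n` component of the endomorphism operad of `L`). -/
abbrev C (K L : Type*) [CommRing K] [AddCommGroup L] [Module K L] (n : ℕ) :=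
  MultilinearMap K (fun _ : Fin n => L) L

/-- The extension of an `n`-ary multilinear operation to sequences `ℕ → L`:
it evaluates `f` on the first `n` entries of the sequence.  Two `n`-ary
multilinear operations are equal iff their extensions are equal, so operadic
identities are stated as identities between extensions. -/
def ex {n : ℕ} (f : C K L n) : (ℕ → L) → L := fun x => f fun j => x j.1

/-- The sign `(-1)^e` for an integer exponent `e`. -/
def sgn (e : ℤ) : ℤ := (((-1 : ℤˣ) ^ e : ℤˣ) : ℤ)

/-- Partial composition `f ∘ᵢ g`, where `n = deg g`:
`(f ∘ᵢ g)(x₀, x₁, …) = (-1)^{i(n-1)} f(x₀,…,x_{i-1}, g(x_i,…,x_{i+n-1}), x_{i+n},…)`. -/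
def pc (n i : ℕ) (f g : (ℕ → L) → L) : (ℕ → L) → L :=
  fun x => sgn ((i : ℤ) * ((n : ℤ) - 1)) •
    f fun j => if j < i then x j else if j = i then g (fun k => x (i + k)) else x (j + n - 1)

/-- Total composition `f ∘ g := Σ_{i=0}^{m-1} f ∘ᵢ g`, where `m = deg f`, `n = deg g`. -/
def tc (m n : ℕ) (f g : (ℕ → L) → L) : (ℕ → L) → L :=
  fun x => ∑ i ∈ Finset.range m, pc n i f g x

/-- The associator `(h, f, g) := (h ∘ f) ∘ g − h ∘ (f ∘ g)` of the total composition,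
where `m = deg h`, `n = deg f`, `p = deg g`. -/
def assoc (m n p : ℕ) (h f g : (ℕ → L) → L) : (ℕ → L) → L :=
  fun x => tc (m + n - 1) p (tc m n h f) g x - tc m (n + p - 1) h (tc n p f g) x

/-- The brace `⟨h|fg⟩ := Σ (h ∘ᵢ f) ∘ⱼ g`, summed over `0 ≤ i ≤ m-2`,
`i + n ≤ j ≤ m + n - 2`, where `m = deg h`, `n = deg f`, `p = deg g`. -/
def br2 (m n p : ℕ) (h f g : (ℕ → L) → L) : (ℕ → L) → L :=
  fun x => ∑ i ∈ Finset.range (m - 1), ∑ j ∈ Finset.Icc (i + n) (m + n - 2),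
    pc p j (pc n i h f) g x

/-- The triple brace `⟨h|fgb⟩ := Σ ((h ∘ᵢ f) ∘ⱼ g) ∘ₖ b`, summed over `0 ≤ i ≤ m-3`,
`i + n ≤ j ≤ m + n - 3`, `j + p ≤ k ≤ m + n + p - 3`, where
`m = deg h`, `n = deg f`, `p = deg g`, `q = deg b`. -/
def br3 (m n p q : ℕ) (h f g b : (ℕ → L) → L) : (ℕ → L) → L :=
  fun x => ∑ i ∈ Finset.range (m - 2), ∑ j ∈ Finset.Icc (i + n) (m + n - 3),
    ∑ k ∈ Finset.Icc (j + p) (m + n + p - 3),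
      pc q k (pc p j (pc n i h f) g) b x

/-- The Gerstenhaber bracket `[f,g] := f ∘ g − (-1)^{|f||g|} g ∘ f`,
where `m = deg f`, `n = deg g`, `|f| = m - 1`, `|g| = n - 1`. -/
def gb (m n : ℕ) (f g : (ℕ → L) → L) : (ℕ → L) → L :=
  fun x => tc m n f g x - sgn (((m : ℤ) - 1) * ((n : ℤ) - 1)) • tc n m g f x

/-- The cup product `f ⌣ g := (-1)^{deg f} (μ ∘₀ f) ∘_{deg f} g`,
where `m = deg f`, `n = deg g`. -/
def cup (μ : C K L 2) (m n : ℕ) (f g : (ℕ → L) → L) : (ℕ → L) → L :=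
  fun x => sgn (m : ℤ) • pc n m (pc m 0 (ex μ) f) g x

/-- The coboundary operator `δ_μ f := −[f, μ]`, where `m = deg f`. -/
def delta (μ : C K L 2) (m : ℕ) (f : (ℕ → L) → L) : (ℕ → L) → L :=
  fun x => - gb m 2 f (ex μ) x

lemma sgn_add (a b : ℤ) : sgn (a + b) = sgn a * sgn b := by
  simp [sgn, zpow_add]

lemma sgn_add_two_mul (e c : ℤ) : sgn (e + 2 * c) = sgn e := by
  simp [sgn, zpow_add, zpow_mul]

/-- `splice i n x w` replaces the block `x i, …, x (i + n - 1)` of `x` by the single entry `w`. -/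
def splice {α : Type*} (i n : ℕ) (x : ℕ → α) (w : α) : ℕ → α :=
  fun j => if j < i then x j else if j = i then w else x (j + n - 1)

lemma pc_eq_splice (n i : ℕ) (f g : (ℕ → L) → L) (x : ℕ → L) :
    pc n i f g x = sgn ((i : ℤ) * ((n : ℤ) - 1)) • f (splice i n x (g fun k => x (i + k))) :=
  rfl

section Splice

variable {α : Type*}

lemma splice_splice_comm_of_lt (x : ℕ → α) (u v : α) {a i : ℕ} (n p : ℕ) (hai : a < i) :
    splice i n (splice a p x u) v = splice a p (splice (i + p - 1) n x v) u := by
  funext k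
  simp only [splice]
  split_ifs <;> first | rfl | omega | (congr 1; omega)

lemma splice_splice_add_of_lt (x : ℕ → α) (v w : α) {i j n : ℕ} (p : ℕ) (hj : j < n) :
    splice i n (splice (i + j) p x w) v = splice i (n + p - 1) x v := by
  funext k
  simp only [splice]
  split_ifs <;> first | rfl | omega | (congr 1; omega)

lemma shift_splice_add (x : ℕ → α) (w : α) (i j p : ℕ) :
    (fun l => splice (i + j) p x w (i + l)) = splice j p (fun l => x (i + l)) w := by
  funext l
  simp only [splice]
  split_ifs <;> first | rfl | omega | (congr 1; omega)

lemma shift_splice_of_lt (x : ℕ → α) (u : α) {a i : ℕ} (p : ℕ) (hai : a < i) :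
    (fun l => splice a p x u (i + l)) = fun l => x (i + p - 1 + l) := by
  funext l
  simp only [splice]
  split_ifs <;> first | rfl | omega | (congr 1; omega)

end Splice

lemma sum_range_eq_add_block {M : Type*} [AddCommMonoid M] (F : ℕ → M) {i n N : ℕ}
    (h : i + n ≤ N) :
    ∑ a ∈ range N, F a
      = ∑ a ∈ range i, F a + (∑ j ∈ range n, F (i + j) + ∑ a ∈ Ico (i + n) N, F a) := by
  rw [range_eq_Ico, ← sum_Ico_consecutive F (Nat.zero_le i) (by omega : i ≤ N),
    ← sum_Ico_consecutive F (Nat.le_add_right i n) h, ← range_eq_Ico,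
    sum_Ico_eq_sum_range F i, add_tsub_cancel_left]

lemma sum_range_sum_Ico_eq_sum_Icc {M : Type*} [AddCommMonoid M] (F : ℕ → ℕ → M) (m n : ℕ) :
    ∑ i ∈ range m, ∑ a ∈ Ico (i + n) (m + n - 1), F i a
      = ∑ i ∈ range (m - 1), ∑ a ∈ Icc (i + n) (m + n - 2), F i a := by
  rw [← sum_subset (range_subset_range.mpr (Nat.sub_le m 1)) fun i _ hi => ?_]
  · refine sum_congr rfl fun i hi => ?_
    rw [mem_range] at hi
    rw [show m + n - 1 = m + n - 2 + 1 by omega, Ico_add_one_right_eq_Icc]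
  · rw [mem_range] at hi
    rw [Ico_eq_empty (by omega), sum_empty]

lemma sum_range_sum_range_eq_sum_Icc {M : Type*} [AddCommMonoid M] (F : ℕ → ℕ → M) (m p : ℕ) :
    ∑ i ∈ range m, ∑ a ∈ range i, F a (i + p - 1)
      = ∑ a ∈ range (m - 1), ∑ j ∈ Icc (a + p) (m + p - 2), F a j := by
  rw [sum_comm' (t' := range (m - 1)) (s' := fun a => Ico (a + 1) m)
    fun i a => by simp only [mem_range, mem_Ico]; omega]
  refine sum_congr rfl fun a ha => ?_
  rw [mem_range] at ha
  refine sum_nbij' (· + p - 1) (· + 1 - p) (fun i hi => ?_) (fun j hj => ?_) (fun i hi => ?_)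
    (fun j hj => ?_) fun _ _ => rfl <;>
  simp only [mem_Ico, mem_Icc] at * <;> omega

lemma ex_congr {n : ℕ} (F : C K L n) {x y : ℕ → L} (hxy : ∀ k < n, x k = y k) :
    ex F x = ex F y :=
  congrArg F (funext fun k => hxy k k.2)

lemma ex_splice_eq_toLinearMap {m : ℕ} (H : C K L m) {i : ℕ} (hi : i < m) (n : ℕ)
    (x : ℕ → L) (w : L) :
    ex H (splice i n x w) = H.toLinearMap (fun k : Fin m => splice i n x 0 k) ⟨i, hi⟩ w := by
  refine congrArg H (funext fun k => ?_)
  rcases eq_or_ne k ⟨i, hi⟩ with rfl | hk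
  · simp [splice]
  · have hk' : k.1 ≠ i := fun h => hk (Fin.ext h)
    simp [splice, Function.update_of_ne hk, hk']

lemma ex_splice_zsmul {m : ℕ} (H : C K L m) {i : ℕ} (hi : i < m) (n : ℕ)
    (x : ℕ → L) (c : ℤ) (w : L) :
    ex H (splice i n x (c • w)) = c • ex H (splice i n x w) := by
  simp only [ex_splice_eq_toLinearMap H hi, map_zsmul]

lemma ex_splice_sum {m : ℕ} (H : C K L m) {i : ℕ} (hi : i < m) (n : ℕ)
    (x : ℕ → L) {ι : Type*} (s : Finset ι) (w : ι → L) :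
    ex H (splice i n x (∑ t ∈ s, w t)) = ∑ t ∈ s, ex H (splice i n x (w t)) := by
  simp only [ex_splice_eq_toLinearMap H hi, map_sum]

lemma pc_sum_right {m : ℕ} (H : C K L m) {i : ℕ} (hi : i < m) (q : ℕ) {ι : Type*}
    (s : Finset ι) (G : ι → (ℕ → L) → L) (x : ℕ → L) :
    pc q i (ex H) (fun y => ∑ t ∈ s, G t y) x = ∑ t ∈ s, pc q i (ex H) (G t) x := by
  simp only [pc_eq_splice, ex_splice_sum H hi, smul_sum]

lemma pc_pc_assoc {m n : ℕ} (H : C K L m) (f g : (ℕ → L) → L) {i j : ℕ}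
    (hi : i < m) (hj : j < n) (p : ℕ) (x : ℕ → L) :
    pc (n + p - 1) i (ex H) (pc p j f g) x = pc p (i + j) (pc n i (ex H) f) g x := by
  simp only [pc_eq_splice, ex_splice_zsmul H hi, smul_smul, shift_splice_add,
    splice_splice_add_of_lt _ _ _ p hj, ← sgn_add, add_assoc]
  congr 2
  push_cast [show 1 ≤ n + p by omega]
  ring

lemma pc_pc_comm_of_lt {n p : ℕ} (hh ff : (ℕ → L) → L) (G : C K L p) {a i : ℕ}
    (hai : a < i) (x : ℕ → L) :
    pc p a (pc n i hh ff) (ex G) x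
      = sgn (((n : ℤ) - 1) * ((p : ℤ) - 1)) • pc n (i + p - 1) (pc p a hh (ex G)) ff x := by
  have hG : ex G (fun l => splice (i + p - 1) n x (ff fun k => x (i + p - 1 + k)) (a + l))
      = ex G (fun l => x (a + l)) :=
    ex_congr G fun l hl => by simp only [splice]; split_ifs <;> first | rfl | omega
  simp only [pc_eq_splice, smul_smul, shift_splice_of_lt _ _ p hai, hG,
    splice_splice_comm_of_lt _ _ _ n p hai, ← sgn_add]
  congr 1
  rw [show ((i + p - 1 : ℕ) : ℤ) = i + p - 1 by omega,
    show ((n : ℤ) - 1) * (p - 1) + ((i + p - 1) * (n - 1) + a * (p - 1))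
      = a * (p - 1) + i * (n - 1) + 2 * ((n - 1) * (p - 1)) by ring, sgn_add_two_mul]

lemma tc_tc_left_eq_sum (m n p : ℕ) (hh ff gg : (ℕ → L) → L) (x : ℕ → L) :
    tc (m + n - 1) p (tc m n hh ff) gg x
      = ∑ i ∈ range m, ∑ a ∈ range (m + n - 1), pc p a (pc n i hh ff) gg x := by
  simp only [tc, pc_eq_splice, smul_sum]
  exact sum_comm

lemma tc_tc_right_eq_sum {m : ℕ} (H : C K L m) (n p : ℕ) (ff gg : (ℕ → L) → L) (x : ℕ → L) :
    tc m (n + p - 1) (ex H) (tc n p ff gg) x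
      = ∑ i ∈ range m, ∑ j ∈ range n, pc p (i + j) (pc n i (ex H) ff) gg x := by
  refine sum_congr rfl fun i hi => ?_
  rw [mem_range] at hi
  exact (pc_sum_right H hi _ (range n) (fun j => pc p j ff gg) x).trans
    (sum_congr rfl fun j hj => pc_pc_assoc H ff gg hi (mem_range.mp hj) p x)

lemma sum_pc_pc_upper_eq_br2 (m n p : ℕ) (hh ff gg : (ℕ → L) → L) (x : ℕ → L) :
    ∑ i ∈ range m, ∑ a ∈ Ico (i + n) (m + n - 1), pc p a (pc n i hh ff) gg x
      = br2 m n p hh ff gg x :=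
  sum_range_sum_Ico_eq_sum_Icc (fun i a => pc p a (pc n i hh ff) gg x) m n

lemma sum_pc_pc_lower_eq_br2 (m n : ℕ) {p : ℕ} (hh ff : (ℕ → L) → L) (G : C K L p) (x : ℕ → L) :
    ∑ i ∈ range m, ∑ a ∈ range i, pc p a (pc n i hh ff) (ex G) x
      = sgn (((n : ℤ) - 1) * ((p : ℤ) - 1)) • br2 m p n hh (ex G) ff x := by
  simp only [sum_congr rfl fun i _ => sum_congr rfl fun a ha =>
    pc_pc_comm_of_lt (n := n) hh ff G (mem_range.mp ha) x, ← smul_sum]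
  rw [br2, sum_range_sum_range_eq_sum_Icc (fun a j => pc n j (pc p a hh (ex G)) ff x)]

/-- the Getzler identity
`(h ∘ f) ∘ g − h ∘ (f ∘ g) = ⟨h|fg⟩ + (-1)^{(n-1)(p-1)} ⟨h|gf⟩`. -/
theorem getzler_identity
    {m n p : ℕ} (h : C K L m) (f : C K L n) (g : C K L p) :
    tc (m + n - 1) p (tc m n (ex h) (ex f)) (ex g)
        - tc m (n + p - 1) (ex h) (tc n p (ex f) (ex g))
      = br2 m n p (ex h) (ex f) (ex g)
          + sgn (((n : ℤ) - 1) * ((p : ℤ) - 1)) • br2 m p n (ex h) (ex g) (ex f) := by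
  funext x
  have split_at_f : ∀ i ∈ range m, ∑ a ∈ range (m + n - 1), pc p a (pc n i (ex h) (ex f)) (ex g) x
      = ∑ a ∈ range i, pc p a (pc n i (ex h) (ex f)) (ex g) x
        + (∑ j ∈ range n, pc p (i + j) (pc n i (ex h) (ex f)) (ex g) x
          + ∑ a ∈ Ico (i + n) (m + n - 1), pc p a (pc n i (ex h) (ex f)) (ex g) x) :=
    fun i hi => sum_range_eq_add_block _ (by rw [mem_range] at hi; omega)
  rw [Pi.sub_apply, tc_tc_left_eq_sum, tc_tc_right_eq_sum, sum_congr rfl split_at_f,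
    sum_add_distrib, sum_add_distrib, sum_pc_pc_upper_eq_br2, sum_pc_pc_lower_eq_br2]
  simp only [Pi.add_apply, Pi.smul_apply]
  abel

end OperadPrelude
end

section
/- Generalized Jacobi identity: for all multilinear maps f ∈ C^m, g ∈ C^n, h ∈ C^p, the Jacobiator J(f⊗g⊗h) := (−1)^{|f||h|}[[f,g],h] + (−1)^{|g||f|}[[g,h],f] + (−1)^{|h||g|}[[h,f],g] satisfies J(f⊗g⊗h) = (−1)^{|f||h|}[(f,g,h) − (−1)^{|g||h|}(f,h,g)] + (−1)^{|g||f|}[(g,h,f) − (−1)^{|h||f|}(g,f,h)] + (−1)^{|h||g|}[(h,f,g) − (−1)^{|f||g|}(h,g,f)], where |f| = m−1, |g| = n−1, |h| = p−1. -/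
open Finset

section OperadPrelude

variable {K : Type*} [CommRing K] {L : Type*} [AddCommGroup L] [Module K L]

lemma sgn_mul_self (a : ℤ) : sgn a * sgn a = 1 := by
  simp [sgn, ← Units.val_mul, Int.units_mul_self]

lemma tc_sub_smul_left (M q : ℕ) (F₁ F₂ H : (ℕ → L) → L) (c : ℤ) (x : ℕ → L) :
    tc M q (fun y => F₁ y - c • F₂ y) H x = tc M q F₁ H x - c • tc M q F₂ H x := by
  simp only [tc, pc, smul_sub, Finset.sum_sub_distrib, Finset.smul_sum, smul_comm c]

lemma pc_ex_eq_toLinearMap {p : ℕ} (h : C K L p) (q i : ℕ) (hi : i < p)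
    (G : (ℕ → L) → L) (x : ℕ → L) :
    pc q i (ex h) G x = sgn ((i : ℤ) * ((q : ℤ) - 1)) •
      h.toLinearMap (fun j : Fin p => if (j : ℕ) < i then x j else x (j + q - 1)) ⟨i, hi⟩
        (G fun k => x (i + k)) := by
  rw [pc, ex, MultilinearMap.toLinearMap_apply]
  congr 2
  funext j
  rcases eq_or_ne (j : ℕ) i with hj | hj
  · obtain rfl : j = ⟨i, hi⟩ := Fin.ext hj
    simp
  · rw [Function.update_of_ne (by simpa [Fin.ext_iff] using hj)]
    simp [hj]

lemma tc_ex_sub_smul_right {p : ℕ} (h : C K L p) (q : ℕ) (G₁ G₂ : (ℕ → L) → L) (c : ℤ)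
    (x : ℕ → L) :
    tc p q (ex h) (fun y => G₁ y - c • G₂ y) x
      = tc p q (ex h) G₁ x - c • tc p q (ex h) G₂ x := by
  rw [tc, tc, tc, Finset.smul_sum, ← Finset.sum_sub_distrib]
  refine Finset.sum_congr rfl fun i hi => ?_
  simp only [pc_ex_eq_toLinearMap h q i (Finset.mem_range.mp hi), map_sub, map_zsmul,
    smul_sub, smul_comm c]

lemma tc_ex_zero_right {p : ℕ} (h : C K L p) (q : ℕ) (x : ℕ → L) :
    tc p q (ex h) (fun _ => 0) x = 0 :=
  Finset.sum_eq_zero fun i hi => by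
    rw [pc_ex_eq_toLinearMap h q i (Finset.mem_range.mp hi), map_zero, smul_zero]

lemma gb_gb_apply (m n : ℕ) {p : ℕ} (F G : (ℕ → L) → L) (h : C K L p) (x : ℕ → L) :
    gb (m + n - 1) p (gb m n F G) (ex h) x
      = tc (m + n - 1) p (tc m n F G) (ex h) x
          - sgn (((m : ℤ) - 1) * ((n : ℤ) - 1)) • tc (m + n - 1) p (tc n m G F) (ex h) x
        - (sgn (((m : ℤ) - 1) * ((p : ℤ) - 1)) * sgn (((n : ℤ) - 1) * ((p : ℤ) - 1))) •
          (tc p (m + n - 1) (ex h) (tc m n F G) x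
            - sgn (((m : ℤ) - 1) * ((n : ℤ) - 1)) • tc p (m + n - 1) (ex h) (tc n m G F) x) := by
  -- For `m = n = 0` the truncated degree `m + n - 1` is `0`, not `-1`, and the sign does not
  -- split; but then `[F, G] = 0`.
  rcases Nat.eq_zero_or_pos (m + n) with hmn | hmn
  · obtain ⟨rfl, rfl⟩ : m = 0 ∧ n = 0 := by omega
    have htc : ∀ F G : (ℕ → L) → L, tc 0 0 F G = fun _ => 0 := fun _ _ => rfl
    have hgb : gb 0 0 F G = fun _ => 0 := by
      funext y
      simp [gb, htc]
    rw [gb, hgb, htc, htc, tc_ex_zero_right]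
    simp [tc]
  have hsgn : sgn ((((m + n - 1 : ℕ) : ℤ) - 1) * ((p : ℤ) - 1))
      = sgn (((m : ℤ) - 1) * ((p : ℤ) - 1)) * sgn (((n : ℤ) - 1) * ((p : ℤ) - 1)) := by
    rw [← sgn_add]
    congr 1
    rw [Nat.cast_sub (by omega : 1 ≤ m + n)]
    push_cast
    ring
  unfold gb
  rw [← hsgn, tc_sub_smul_left, tc_ex_sub_smul_right]

/-- the generalized Jacobi identity, expressing the Jacobiator of
the Gerstenhaber bracket via the associators of the total composition. -/
theorem generalized_jacobi_identity
    {m n p : ℕ} (f : C K L m) (g : C K L n) (h : C K L p) :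
    sgn (((m : ℤ) - 1) * ((p : ℤ) - 1)) •
        gb (m + n - 1) p (gb m n (ex f) (ex g)) (ex h)
      + sgn (((n : ℤ) - 1) * ((m : ℤ) - 1)) •
          gb (n + p - 1) m (gb n p (ex g) (ex h)) (ex f)
      + sgn (((p : ℤ) - 1) * ((n : ℤ) - 1)) •
          gb (p + m - 1) n (gb p m (ex h) (ex f)) (ex g)
    = sgn (((m : ℤ) - 1) * ((p : ℤ) - 1)) •
          (assoc m n p (ex f) (ex g) (ex h)
            - sgn (((n : ℤ) - 1) * ((p : ℤ) - 1)) • assoc m p n (ex f) (ex h) (ex g))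
        + sgn (((n : ℤ) - 1) * ((m : ℤ) - 1)) •
            (assoc n p m (ex g) (ex h) (ex f)
              - sgn (((p : ℤ) - 1) * ((m : ℤ) - 1)) • assoc n m p (ex g) (ex f) (ex h))
        + sgn (((p : ℤ) - 1) * ((n : ℤ) - 1)) •
            (assoc p m n (ex h) (ex f) (ex g)
              - sgn (((m : ℤ) - 1) * ((n : ℤ) - 1)) • assoc p n m (ex h) (ex g) (ex f)) := by
  funext x
  simp only [Pi.add_apply, Pi.smul_apply, Pi.sub_apply, gb_gb_apply, assoc]
  rw [show n + m - 1 = m + n - 1 by omega, show p + n - 1 = n + p - 1 by omega,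
    show m + p - 1 = p + m - 1 by omega]
  have hmn := sgn_mul_self (((m : ℤ) - 1) * ((n : ℤ) - 1))
  have hnp := sgn_mul_self (((n : ℤ) - 1) * ((p : ℤ) - 1))
  have hmp := sgn_mul_self (((m : ℤ) - 1) * ((p : ℤ) - 1))
  match_scalars <;> grind

end OperadPrelude
end

section
/- Right translations are graded derivations of the Gerstenhaber bracket: defining R_f g := [g, f], one has, for all multilinear maps f ∈ C^m, g ∈ C^n, h ∈ C^p, R_f [g,h] = (−1)^{|f||h|} [R_f g, h] + [g, R_f h], where |f| = m−1, |g| = n−1, |h| = p−1. -/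
/-!
The total composition `f ∘ g = Σᵢ f ∘ᵢ g` is right pre-Lie: its associator
`(f, g, h) = (f ∘ g) ∘ h - f ∘ (g ∘ h)` counts only the double insertions of `g` and `h` into
disjoint slots of `f`, i.e. it equals the brace `⟨f|gh⟩ + (-1)^{|g||h|} ⟨f|hg⟩`, and is therefore
graded symmetric in `g` and `h`. Expanding both sides of the identity, every term is a double
composition; writing each left-nested one `(x ∘ y) ∘ z` as `x ∘ (y ∘ z)` plus an associator, the
right-nested terms cancel in pairs and the six associators cancel by graded symmetry.
-/

open Finset

section OperadPrelude

variable {K : Type*} [CommRing K] {L : Type*} [AddCommGroup L] [Module K L]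

lemma sgn_eq_one_or_eq_neg_one (a : ℤ) : sgn a = 1 ∨ sgn a = -1 := by
  rcases Int.units_eq_one_or ((-1 : ℤˣ) ^ a) with h | h <;> simp [sgn, h]

lemma sgn_eq_sgn_of_even_sub {a b : ℤ} (h : Even (a - b)) : sgn a = sgn b :=
  congrArg Units.val ((Int.negOnePow_eq_iff a b).2 h)

lemma sgn_natCast_add_sub_one_mul {n p : ℕ} (hnp : 0 < n + p) (k : ℤ) :
    sgn ((((n + p - 1 : ℕ) : ℤ) - 1) * k)
      = sgn (((n : ℤ) - 1) * k) * sgn (((p : ℤ) - 1) * k) := by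
  rw [← sgn_add]
  push_cast [show 1 ≤ n + p by omega]
  ring_nf

lemma sgn_mul_natCast_add_sub_one {n p : ℕ} (hnp : 0 < n + p) (k : ℤ) :
    sgn (k * (((n + p - 1 : ℕ) : ℤ) - 1))
      = sgn (k * ((n : ℤ) - 1)) * sgn (k * ((p : ℤ) - 1)) := by
  rw [← sgn_add]
  push_cast [show 1 ≤ n + p by omega]
  ring_nf

lemma MultilinearMap.toLinearMap_congr {R ι M₂ : Type*} {M₁ : ι → Type*} [DecidableEq ι]
    [Semiring R] [∀ i, AddCommMonoid (M₁ i)] [AddCommMonoid M₂] [∀ i, Module R (M₁ i)]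
    [Module R M₂] (F : MultilinearMap R M₁ M₂) {m m' : ∀ i, M₁ i} (i : ι)
    (h : ∀ j ≠ i, m j = m' j) : F.toLinearMap m i = F.toLinearMap m' i := by
  ext v
  simp only [MultilinearMap.toLinearMap_apply]
  congr 1
  funext j
  by_cases hj : j = i
  · subst hj; simp
  · simp [Function.update_of_ne hj, h j hj]

lemma Finset.sum_range_eq_add_sum_range_add_sum_Ico {M : Type*} [AddCommMonoid M] (X : ℕ → M)
    {i b N : ℕ} (h : i + b ≤ N) :
    ∑ j ∈ range N, X j
      = ∑ j ∈ range i, X j + ∑ t ∈ range b, X (i + t) + ∑ j ∈ Ico (i + b) N, X j := by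
  rw [← sum_range_add_sum_Ico X h, ← sum_range_add_sum_Ico X (Nat.le_add_right i b),
    sum_Ico_eq_sum_range, Nat.add_sub_cancel_left]

def pcArg (n i : ℕ) (g : (ℕ → L) → L) (x : ℕ → L) : ℕ → L :=
  fun j => if j < i then x j else if j = i then g (fun k => x (i + k)) else x (j + n - 1)

lemma pc_apply (n i : ℕ) (f g : (ℕ → L) → L) (x : ℕ → L) :
    pc n i f g x = sgn (i * ((n : ℤ) - 1)) • f (pcArg n i g x) := rfl

lemma tc_apply (m n : ℕ) (f g : (ℕ → L) → L) (x : ℕ → L) :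
    tc m n f g x = ∑ i ∈ range m, pc n i f g x := rfl

lemma pc_ex_apply {a : ℕ} (F : C K L a) (n : ℕ) {i : ℕ} (hi : i < a) (g : (ℕ → L) → L)
    (x : ℕ → L) :
    pc n i (ex F) g x = sgn (i * ((n : ℤ) - 1)) •
      F.toLinearMap (fun j : Fin a => if j.1 < i then x j else x (j + n - 1)) ⟨i, hi⟩
        (g fun k => x (i + k)) := by
  rw [pc_apply, MultilinearMap.toLinearMap_apply, ex]
  congr 2
  funext j
  rcases lt_trichotomy j.1 i with hj | hj | hj
  · simp [pcArg, hj, Function.update_of_ne (ne_of_lt (show j < ⟨i, hi⟩ from hj))]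
  · obtain rfl : j = ⟨i, hi⟩ := Fin.ext hj
    simp [pcArg]
  · simp [pcArg, hj.ne', not_lt_of_gt hj,
      Function.update_of_ne (ne_of_gt (show ⟨i, hi⟩ < j from hj))]

lemma dependsOn_ex {n : ℕ} (F : C K L n) : DependsOn (ex F) (Set.Iio n) :=
  fun _ _ h => congrArg F (funext fun j => h j j.2)

lemma pc_pc_comm_of_lt_s8 {b c i j : ℕ} (f g h : (ℕ → L) → L) (hh : DependsOn h (Set.Iio c))
    (hji : j < i) :
    pc c j (pc b i f g) h
      = sgn (((b : ℤ) - 1) * ((c : ℤ) - 1)) • pc b (i + c - 1) (pc c j f h) g := by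
  funext x
  simp only [pc_apply, Pi.smul_apply, smul_smul, ← sgn_add]
  congr 1
  · refine sgn_eq_sgn_of_even_sub ⟨-(((b : ℤ) - 1) * ((c : ℤ) - 1)), ?_⟩
    push_cast [show 1 ≤ i + c by omega]
    ring
  · congr 1
    funext k
    simp only [pcArg]
    split_ifs <;> first
      | rfl
      | omega
      | (congr 1; omega)
      | exact hh fun l hl => by rw [if_pos (by simp at hl; omega)]
      | (congr 1; funext l; rw [if_neg (by omega), if_neg (by omega)]; congr 1; omega)

lemma pc_pc_assoc_s8 {a b c i t : ℕ} (F : C K L a) (g h : (ℕ → L) → L) (hi : i < a) (ht : t < b) :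
    pc c (i + t) (pc b i (ex F) g) h = pc (b + c - 1) i (ex F) (pc c t g h) := by
  funext x
  rw [pc_apply, pc_ex_apply F _ hi, pc_ex_apply F _ hi, pc_apply, map_zsmul, smul_smul, smul_smul,
    ← sgn_add, ← sgn_add]
  congr 2
  · push_cast [show 1 ≤ b + c by omega]
    ring
  · refine F.toLinearMap_congr _ fun j hj => ?_
    have hj' : j.1 ≠ i := fun h => hj (Fin.ext h)
    simp only [pcArg]
    split_ifs <;> first | rfl | omega | (congr 1; omega)
  · congr 1
    funext k
    simp only [pcArg]
    split_ifs <;> first | rfl | omega | (congr 1; omega) | (congr 1; funext l; congr 1; omega)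

lemma pc_tc_left_apply (n i a b : ℕ) (f g h : (ℕ → L) → L) (x : ℕ → L) :
    pc n i (tc a b f g) h x = ∑ t ∈ range a, pc n i (pc b t f g) h x := by
  simp only [pc_apply, tc, smul_sum]

lemma pc_tc_right_apply {a : ℕ} (F : C K L a) (n : ℕ) {i : ℕ} (hi : i < a) (b c : ℕ)
    (g h : (ℕ → L) → L) (x : ℕ → L) :
    pc n i (ex F) (tc b c g h) x = ∑ t ∈ range b, pc n i (ex F) (pc c t g h) x := by
  simp only [pc_ex_apply F n hi, tc, map_sum, smul_sum]

lemma tc_tc_apply (a b c : ℕ) (f g h : (ℕ → L) → L) (x : ℕ → L) :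
    tc (a + b - 1) c (tc a b f g) h x
      = ∑ i ∈ range a, ∑ j ∈ range (a + b - 1), pc c j (pc b i f g) h x := by
  simp only [tc, pc_tc_left_apply]
  exact sum_comm

lemma tc_ex_tc_apply {a : ℕ} (F : C K L a) (b c : ℕ) (g h : (ℕ → L) → L) (x : ℕ → L) :
    tc a (b + c - 1) (ex F) (tc b c g h) x
      = ∑ i ∈ range a, ∑ t ∈ range b, pc c (i + t) (pc b i (ex F) g) h x := by
  refine sum_congr rfl fun i hi => ?_
  rw [pc_tc_right_apply F _ (mem_range.1 hi)]
  refine sum_congr rfl fun t ht => ?_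
  rw [pc_pc_assoc_s8 F g h (mem_range.1 hi) (mem_range.1 ht)]

lemma br2_apply (a b c : ℕ) (f g h : (ℕ → L) → L) (x : ℕ → L) :
    br2 a b c f g h x = ∑ i ∈ range a, ∑ j ∈ Ico (i + b) (a + b - 1), pc c j (pc b i f g) h x := by
  rw [br2, ← sum_subset (range_subset_range.2 (Nat.sub_le a 1))]
  · refine sum_congr rfl fun i hi => sum_congr ?_ fun _ _ => rfl
    ext j
    simp only [mem_range] at hi
    simp only [mem_Icc, mem_Ico]
    omega
  · intro i hi hi'
    simp only [mem_range] at hi hi'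
    rw [Ico_eq_empty (by omega), sum_empty]

lemma sum_pc_pc_of_lt_eq_smul_br2 {a b c : ℕ} (f g h : (ℕ → L) → L)
    (hh : DependsOn h (Set.Iio c)) (x : ℕ → L) :
    ∑ i ∈ range a, ∑ j ∈ range i, pc c j (pc b i f g) h x
      = sgn (((b : ℤ) - 1) * ((c : ℤ) - 1)) • br2 a c b f h g x := by
  rw [br2_apply, smul_sum, sum_comm' (t' := range a) (s' := fun j => Ioo j a)]
  · refine sum_congr rfl fun j _ => ?_
    rw [smul_sum]
    refine sum_nbij' (fun i => i + c - 1) (fun k => k + 1 - c) ?_ ?_ ?_ ?_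
      fun i hi => congrFun (pc_pc_comm_of_lt_s8 f g h hh (mem_Ioo.1 hi).1) x
    all_goals intro i hi; simp only [mem_Ioo, mem_Ico] at hi ⊢; omega
  · intro i j
    simp only [mem_range, mem_Ioo]
    omega

lemma assoc_eq_br2_add_smul_br2 {a b c : ℕ} (F : C K L a) (g h : (ℕ → L) → L)
    (hh : DependsOn h (Set.Iio c)) :
    assoc a b c (ex F) g h
      = br2 a b c (ex F) g h + sgn (((b : ℤ) - 1) * ((c : ℤ) - 1)) • br2 a c b (ex F) h g := by
  funext x
  have regions : tc (a + b - 1) c (tc a b (ex F) g) h x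
      = ∑ i ∈ range a, ∑ j ∈ range i, pc c j (pc b i (ex F) g) h x
        + tc a (b + c - 1) (ex F) (tc b c g h) x + br2 a b c (ex F) g h x := by
    rw [tc_tc_apply, tc_ex_tc_apply, br2_apply, ← sum_add_distrib, ← sum_add_distrib]
    exact sum_congr rfl fun i hi =>
      sum_range_eq_add_sum_range_add_sum_Ico _ (by simp only [mem_range] at hi; omega)
  rw [assoc, regions, sum_pc_pc_of_lt_eq_smul_br2 _ _ _ hh, Pi.add_apply, Pi.smul_apply]
  abel

lemma assoc_symm {a b c : ℕ} (F : C K L a) (g h : (ℕ → L) → L)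
    (hg : DependsOn g (Set.Iio b)) (hh : DependsOn h (Set.Iio c)) :
    assoc a b c (ex F) g h = sgn (((b : ℤ) - 1) * ((c : ℤ) - 1)) • assoc a c b (ex F) h g := by
  rw [assoc_eq_br2_add_smul_br2 F g h hh, assoc_eq_br2_add_smul_br2 F h g hg, smul_add, smul_smul,
    mul_comm ((c : ℤ) - 1), sgn_mul_self, one_smul, add_comm]

lemma gb_eq_tc_sub_smul_tc (a b : ℕ) (f g : (ℕ → L) → L) :
    gb a b f g = tc a b f g - sgn (((a : ℤ) - 1) * ((b : ℤ) - 1)) • tc b a g f := rfl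

lemma tc_zero_left (b : ℕ) (f g : (ℕ → L) → L) : tc 0 b f g = 0 := by
  funext x
  simp [tc]

lemma tc_ex_zero {a : ℕ} (F : C K L a) (b : ℕ) : tc a b (ex F) 0 = 0 := by
  funext x
  exact sum_eq_zero fun i hi => by
    rw [pc_ex_apply F b (mem_range.1 hi), Pi.zero_apply, map_zero, smul_zero]

lemma tc_gb_left (d c n p : ℕ) (f g h : (ℕ → L) → L) :
    tc d c (gb n p f g) h
      = tc d c (tc n p f g) h - sgn (((n : ℤ) - 1) * ((p : ℤ) - 1)) • tc d c (tc p n g f) h := by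
  funext x
  simp only [tc_apply, Pi.sub_apply, Pi.smul_apply, smul_sum, ← sum_sub_distrib]
  refine sum_congr rfl fun i _ => ?_
  rw [pc_apply, pc_apply, pc_apply, gb_eq_tc_sub_smul_tc, Pi.sub_apply, Pi.smul_apply, smul_sub,
    smul_comm]

lemma tc_gb_right {a : ℕ} (F : C K L a) (d n p : ℕ) (f g : (ℕ → L) → L) :
    tc a d (ex F) (gb n p f g)
      = tc a d (ex F) (tc n p f g)
        - sgn (((n : ℤ) - 1) * ((p : ℤ) - 1)) • tc a d (ex F) (tc p n g f) := by
  funext x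
  simp only [tc_apply, Pi.sub_apply, Pi.smul_apply, smul_sum, ← sum_sub_distrib]
  refine sum_congr rfl fun i hi => ?_
  rw [pc_ex_apply F d (mem_range.1 hi), pc_ex_apply F d (mem_range.1 hi),
    pc_ex_apply F d (mem_range.1 hi), gb_eq_tc_sub_smul_tc, Pi.sub_apply, Pi.smul_apply, map_sub,
    map_zsmul, smul_sub, smul_comm]

/- The degree `n + p - 1` of `[f, g]` is truncated to `0` when `n = p = 0`, which spoils the
Koszul sign; but then `[f, g] = 0`. -/
lemma gb_gb_left {n p m : ℕ} (f g : (ℕ → L) → L) (H : C K L m) :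
    gb (n + p - 1) m (gb n p f g) (ex H)
      = tc (n + p - 1) m (tc n p f g) (ex H)
        - sgn (((n : ℤ) - 1) * ((p : ℤ) - 1)) • tc (p + n - 1) m (tc p n g f) (ex H)
        - (sgn (((n : ℤ) - 1) * ((m : ℤ) - 1)) * sgn (((p : ℤ) - 1) * ((m : ℤ) - 1))) •
          (tc m (n + p - 1) (ex H) (tc n p f g)
            - sgn (((n : ℤ) - 1) * ((p : ℤ) - 1)) • tc m (p + n - 1) (ex H) (tc p n g f)) := by
  rw [gb_eq_tc_sub_smul_tc, tc_gb_left, tc_gb_right, Nat.add_comm p n]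
  rcases Nat.eq_zero_or_pos (n + p) with hnp | hnp
  · obtain ⟨rfl, rfl⟩ : n = 0 ∧ p = 0 := by omega
    simp only [tc_zero_left, tc_ex_zero, smul_zero, sub_zero]
  · rw [sgn_natCast_add_sub_one_mul hnp]

lemma gb_gb_right {n p m : ℕ} (F : C K L n) (g h : (ℕ → L) → L) :
    gb n (p + m - 1) (ex F) (gb p m g h)
      = tc n (p + m - 1) (ex F) (tc p m g h)
        - sgn (((p : ℤ) - 1) * ((m : ℤ) - 1)) • tc n (m + p - 1) (ex F) (tc m p h g)
        - (sgn (((n : ℤ) - 1) * ((p : ℤ) - 1)) * sgn (((n : ℤ) - 1) * ((m : ℤ) - 1))) •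
          (tc (p + m - 1) n (tc p m g h) (ex F)
            - sgn (((p : ℤ) - 1) * ((m : ℤ) - 1)) • tc (m + p - 1) n (tc m p h g) (ex F)) := by
  rw [gb_eq_tc_sub_smul_tc, tc_gb_left, tc_gb_right, Nat.add_comm m p]
  rcases Nat.eq_zero_or_pos (p + m) with hpm | hpm
  · obtain ⟨rfl, rfl⟩ : p = 0 ∧ m = 0 := by omega
    simp only [tc_zero_left, tc_ex_zero, Nat.add_zero, Nat.zero_sub, smul_zero, sub_zero]
  · rw [sgn_mul_natCast_add_sub_one hpm]

lemma tc_tc_eq_tc_tc_add_assoc (a b c : ℕ) (f g h : (ℕ → L) → L) :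
    tc (a + b - 1) c (tc a b f g) h = tc a (b + c - 1) f (tc b c g h) + assoc a b c f g h := by
  funext x
  rw [Pi.add_apply, assoc, add_sub_cancel]

/-- right translations `R_f g := [g, f]` are graded derivations of
the Gerstenhaber bracket: `R_f [g,h] = (-1)^{|f||h|} [R_f g, h] + [g, R_f h]`. -/
theorem right_translations_are_bracket_derivations
    {m n p : ℕ} (f : C K L m) (g : C K L n) (h : C K L p) :
    gb (n + p - 1) m (gb n p (ex g) (ex h)) (ex f)
      = sgn (((m : ℤ) - 1) * ((p : ℤ) - 1)) •
            gb (n + m - 1) p (gb n m (ex g) (ex f)) (ex h)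
          + gb n (p + m - 1) (ex g) (gb p m (ex h) (ex f)) := by
  rw [gb_gb_left, gb_gb_left, gb_gb_right]
  simp only [tc_tc_eq_tc_tc_add_assoc]
  rw [assoc_symm g (ex h) (ex f) (dependsOn_ex h) (dependsOn_ex f),
    assoc_symm h (ex g) (ex f) (dependsOn_ex g) (dependsOn_ex f),
    assoc_symm f (ex g) (ex h) (dependsOn_ex g) (dependsOn_ex h), mul_comm ((m : ℤ) - 1)]
  rcases sgn_eq_one_or_eq_neg_one (((n : ℤ) - 1) * ((m : ℤ) - 1)) with hnm | hnm <;>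
  rcases sgn_eq_one_or_eq_neg_one (((n : ℤ) - 1) * ((p : ℤ) - 1)) with hnp | hnp <;>
  rcases sgn_eq_one_or_eq_neg_one (((p : ℤ) - 1) * ((m : ℤ) - 1)) with hpm | hpm <;>
  simp only [hnm, hnp, hpm] <;> module

end OperadPrelude
end

section
/- Right Leibniz rule in an operadic system: for every bilinear map μ ∈ C² and all multilinear maps f ∈ C^m, g ∈ C^n, h ∈ C^p, (f ⌣ g) ∘ h = f ⌣ (g ∘ h) + (−1)^{(p−1)n} (f ∘ h) ⌣ g. -/
/-!
Since `f` only reads its first `m` arguments, `(f ⌣ g)(x) = ±μ(f(x₀,…), g(x_m,…))`. Inserting `h`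
into one of the first `m` slots of `f ⌣ g` therefore inserts it into `f`, and inserting it into
one of the last `n` slots inserts it into `g`; up to signs, which agree modulo 2, the partial
compositions `(f ⌣ g) ∘ᵢ h` are the terms `(f ∘ᵢ h) ⌣ g` and `f ⌣ (g ∘ⱼ h)`, and summing over
`i` and `j` gives the two sides of the rule.
-/
open Finset

section OperadPrelude

variable {K : Type*} [CommRing K] {L : Type*} [AddCommGroup L] [Module K L]

lemma update_vecCons_two_zero {α : Type*} (u v w : α) : Function.update ![u, v] 0 w = ![w, v] := by
  ext j; fin_cases j <;> rfl

lemma update_vecCons_two_one {α : Type*} (u v w : α) : Function.update ![u, v] 1 w = ![u, w] := by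
  ext j; fin_cases j <;> rfl

def toBilin (μ : C K L 2) : L →ₗ[K] L →ₗ[K] L :=
  LinearMap.mk₂ K (fun u v => μ ![u, v])
    (fun u u' v => by simpa only [update_vecCons_two_zero] using μ.map_update_add ![u, v] 0 u u')
    (fun c u v => by simpa only [update_vecCons_two_zero] using μ.map_update_smul ![u, v] 0 c u)
    (fun u v v' => by simpa only [update_vecCons_two_one] using μ.map_update_add ![u, v] 1 v v')
    (fun c u v => by simpa only [update_vecCons_two_one] using μ.map_update_smul ![u, v] 1 c v)

lemma ex_eq_toBilin (μ : C K L 2) (x : ℕ → L) : ex μ x = toBilin μ (x 0) (x 1) := by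
  simp only [ex, toBilin, LinearMap.mk₂_apply]
  congr 1; ext j; fin_cases j <;> rfl

def DependsOnFirst (a : ℕ) (F : (ℕ → L) → L) : Prop :=
  ∀ x y : ℕ → L, (∀ k < a, x k = y k) → F x = F y

lemma dependsOnFirst_ex {a : ℕ} (f : C K L a) : DependsOnFirst a (ex f) :=
  fun _ _ hxy => congrArg f (funext fun j => hxy j j.isLt)

lemma DependsOnFirst.pc {a b i : ℕ} {F G : (ℕ → L) → L} (hF : DependsOnFirst a F)
    (hG : DependsOnFirst b G) (hi : i < a) : DependsOnFirst (a + b - 1) (pc b i F G) := by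
  intro x y hxy
  unfold _root_.pc
  congr 1
  refine hF _ _ fun j hj => ?_
  split_ifs
  · exact hxy j (by omega)
  · exact hG _ _ fun k hk => hxy _ (by omega)
  · exact hxy _ (by omega)

lemma DependsOnFirst.tc {a b : ℕ} {F G : (ℕ → L) → L} (hF : DependsOnFirst a F)
    (hG : DependsOnFirst b G) : DependsOnFirst (a + b - 1) (tc a b F G) :=
  fun x y hxy => Finset.sum_congr rfl fun _ hi => hF.pc hG (mem_range.mp hi) x y hxy

lemma cup_apply (μ : C K L 2) {a : ℕ} (b : ℕ) {F : (ℕ → L) → L} (G : (ℕ → L) → L)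
    (hF : DependsOnFirst a F) (x : ℕ → L) :
    cup μ a b F G x = sgn (a * b) • toBilin μ (F x) (G fun k => x (a + k)) := by
  simp only [cup, pc, ex_eq_toBilin, Nat.not_lt_zero, if_false, if_true, zero_add,
    lt_self_iff_false, Nat.add_sub_cancel_left]
  rw [hF _ x fun k hk => if_pos hk, smul_smul, smul_smul, ← sgn_add, ← sgn_add]
  congr 2
  ring

lemma pc_cup_of_lt (μ : C K L 2) {a : ℕ} (b : ℕ) {p i : ℕ} {F : (ℕ → L) → L}
    (G : (ℕ → L) → L) {H : (ℕ → L) → L} (hF : DependsOnFirst a F) (hH : DependsOnFirst p H)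
    (hi : i < a) :
    pc p i (cup μ a b F G) H = sgn ((p - 1) * b) • cup μ (a + p - 1) b (pc p i F H) G := by
  funext x
  rw [Pi.smul_apply, cup_apply μ b G (hF.pc hH hi)]
  conv_lhs => unfold pc; rw [cup_apply μ b G hF]
  have hbeyond : ∀ k, ¬ a + k < i ∧ a + k ≠ i := fun k => ⟨by omega, by omega⟩
  have hcast : ((a + p - 1 : ℕ) : ℤ) = a + p - 1 := by omega
  simp only [hbeyond, if_false, pc, map_zsmul, LinearMap.smul_apply, smul_smul, ← sgn_add, hcast]
  congr 1
  · exact sgn_eq_sgn_of_even_sub ⟨-((p - 1) * b), by ring⟩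
  · congr 2; funext k; congr 1; omega

lemma pc_add_cup (μ : C K L 2) {a : ℕ} (b : ℕ) {p i : ℕ} {F : (ℕ → L) → L}
    (G H : (ℕ → L) → L) (hF : DependsOnFirst a F) (hi : i < b) :
    pc p (a + i) (cup μ a b F G) H = cup μ a (b + p - 1) F (pc p i G H) := by
  funext x
  rw [cup_apply μ _ _ hF]
  conv_lhs => unfold pc; rw [cup_apply μ b G hF]
  rw [hF _ x fun k hk => if_pos (by omega)]
  have hcast : ((b + p - 1 : ℕ) : ℤ) = b + p - 1 := by omega
  simp only [pc, add_lt_add_iff_left, add_right_inj, map_zsmul, smul_smul, ← sgn_add, hcast,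
    Nat.cast_add, add_assoc]
  congr 1
  · congr 1; ring
  · congr 2
    funext k
    split_ifs <;> congr 1
    omega

lemma cup_tc_left (μ : C K L 2) {k : ℕ} (b : ℕ) {p : ℕ} {F : (ℕ → L) → L} (G : (ℕ → L) → L)
    {H : (ℕ → L) → L} (hF : DependsOnFirst k F) (hH : DependsOnFirst p H) :
    cup μ (k + p - 1) b (tc k p F H) G = ∑ i ∈ range k, cup μ (k + p - 1) b (pc p i F H) G := by
  funext x
  rw [Finset.sum_apply, cup_apply μ b G (hF.tc hH)]
  simp only [tc, map_sum, LinearMap.sum_apply, Finset.smul_sum]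
  exact Finset.sum_congr rfl fun i hi => (cup_apply μ b G (hF.pc hH (mem_range.mp hi)) x).symm

lemma cup_tc_right (μ : C K L 2) {a : ℕ} (b : ℕ) {k p : ℕ} {F : (ℕ → L) → L}
    (G H : (ℕ → L) → L) (hF : DependsOnFirst a F) :
    cup μ a (b + p - 1) F (tc k p G H) = ∑ i ∈ range k, cup μ a (b + p - 1) F (pc p i G H) := by
  funext x
  simp only [Finset.sum_apply, cup_apply μ _ _ hF, tc, map_sum, Finset.smul_sum]

/-- the right Leibniz rule
`(f ⌣ g) ∘ h = f ⌣ (g ∘ h) + (-1)^{(p-1)n} (f ∘ h) ⌣ g`. -/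
theorem right_leibniz_rule
    (μ : C K L 2) {m n p : ℕ} (f : C K L m) (g : C K L n) (h : C K L p) :
    tc (m + n) p (cup μ m n (ex f) (ex g)) (ex h)
      = cup μ m (n + p - 1) (ex f) (tc n p (ex g) (ex h))
          + sgn (((p : ℤ) - 1) * (n : ℤ)) •
              cup μ (m + p - 1) n (tc m p (ex f) (ex h)) (ex g) := by
  have hf := dependsOnFirst_ex f
  have hh := dependsOnFirst_ex h
  have hsplit : tc (m + n) p (cup μ m n (ex f) (ex g)) (ex h)
      = ∑ i ∈ range m, pc p i (cup μ m n (ex f) (ex g)) (ex h)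
        + ∑ i ∈ range n, pc p (m + i) (cup μ m n (ex f) (ex g)) (ex h) := by
    funext x
    simp only [tc, Pi.add_apply, Finset.sum_apply, Finset.sum_range_add]
  rw [hsplit, cup_tc_right μ n (ex g) (ex h) hf, cup_tc_left μ n (ex g) hf hh, Finset.smul_sum,
    add_comm]
  congr 1
  · exact Finset.sum_congr rfl fun _ hi => pc_add_cup μ n (ex g) (ex h) hf (mem_range.mp hi)
  · exact Finset.sum_congr rfl fun _ hi => pc_cup_of_lt μ n (ex g) hf hh (mem_range.mp hi)

end OperadPrelude
end
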